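/- The map F : ℂ⁶ → ℂ⁶ defined by F(x, y, z, t, u, v) = (x², −xy, −xz, −xt + 2yu − zv, −xu + z², −xv + 2yz) satisfies F(F(x, y, z, t, u, v)) = x³ · (x, y, z, t, u, v) for every (x, y, z, t, u, v) ∈ ℂ⁶. -/
import Mathlib


/-- The adjoint map of the six-dimensional Jordan algebra `𝒥_{ES}^a`:
`F(x,y,z,t,u,v) = (x², −xy, −xz, −xt + 2yu − zv, −xu + z², −xv + 2yz)`. -/
def FJESa : (ℂ × ℂ × ℂ × ℂ × ℂ × ℂ) → (ℂ × ℂ × ℂ × ℂ × ℂ × ℂ) :=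
  fun p => (p.1 ^ 2,
    -(p.1 * p.2.1),
    -(p.1 * p.2.2.1),
    -(p.1 * p.2.2.2.1) + 2 * p.2.1 * p.2.2.2.2.1 - p.2.2.1 * p.2.2.2.2.2,
    -(p.1 * p.2.2.2.2.1) + p.2.2.1 ^ 2,
    -(p.1 * p.2.2.2.2.2) + 2 * p.2.1 * p.2.2.1)

/-- `F(F(x,y,z,t,u,v)) = x³ · (x,y,z,t,u,v)` for every point of `ℂ⁶`. -/
theorem FJESa_involutive (x y z t u v : ℂ) :
    FJESa (FJESa (x, y, z, t, u, v))
      = x ^ 3 • ((x, y, z, t, u, v) : ℂ × ℂ × ℂ × ℂ × ℂ × ℂ) := by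
  simp only [FJESa, Prod.smul_mk, smul_eq_mul]
  refine Prod.ext ?_ (Prod.ext ?_ (Prod.ext ?_ (Prod.ext ?_ (Prod.ext ?_ ?_)))) <;> simp <;> ring
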